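/- Proposition (natural residual controls the restricted strong merit function): Suppose Assumptions 1 and 2 hold. Fix η > 0 and w ∈ 𝒲, let w′ := P_w(ηF(w)) = argmin_{z ∈ 𝒲} { ⟨ηF(w), z⟩ + (1/(2γ))‖z − w‖² }, and define the quadratic natural residual r_η(w) := ‖w − w′‖². Then for every D > 0, sup{ ⟨F(w′), w′ − z⟩ : z ∈ 𝒲, ‖w′ − z‖ ≤ D } ≤ (L + δ/(ηγ)) D √(r_η(w)). -/

import Mathlib

open scoped RealInnerProductSpace
open Finset MeasureTheory

/-- `Vec d` is the ambient space `ℝ^d` with its standard inner product. -/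
abbrev Vec (d : ℕ) := EuclideanSpace ℝ (Fin d)

/-- The dual norm `‖y‖_* = sup_{nrm x ≤ 1} ⟪x, y⟫` of a (general) norm `nrm` on `ℝ^d`. -/
noncomputable def dualNorm {d : ℕ} (nrm : Vec d → ℝ) (y : Vec d) : ℝ :=
  sSup ((fun x => (⟪x, y⟫ : ℝ)) '' {x | nrm x ≤ 1})

/-- The Bregman divergence `V_v(w) = ½‖w‖² − ½‖v‖² − ⟪∇½‖v‖², w − v⟫` of `½ nrm²`,
where `g` is the gradient map of `½ nrm²`. -/
noncomputable def breg {d : ℕ} (nrm : Vec d → ℝ) (g : Vec d → Vec d) (v w : Vec d) : ℝ :=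
  nrm w ^ 2 / 2 - nrm v ^ 2 / 2 - ⟪g v, w - v⟫

/-!
The prox step is characterised by its first-order optimality condition
`⟪η F(w) + γ⁻¹ ∇½‖w' − w‖², z − w'⟫ ≥ 0` for `z ∈ W`. Split
`⟪F(w'), w' − z⟫ = ⟪F(w') − F(w), w' − z⟫ + ⟪F(w), w' − z⟫`: the first term is at most
`L D ‖w' − w‖` by Lipschitz continuity, and by the optimality condition and the gradient bound
the second is at most `δ D ‖w' − w‖ / (ηγ)`. Both estimates are instances of
`⟪x, y⟫ ≤ ‖x‖ ‖y‖_*`, which holds because in finite dimension the unit ball of a norm is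
bounded, so the supremum defining `‖y‖_*` is a genuine one.
-/

theorem Seminorm.exists_pos_mul_norm_le {E : Type*} [NormedAddCommGroup E] [NormedSpace ℝ E]
    [FiniteDimensional ℝ E] (p : Seminorm ℝ E) (hp : ∀ x, x ≠ 0 → 0 < p x) :
    ∃ c > 0, ∀ x, c * ‖x‖ ≤ p x := by
  rcases subsingleton_or_nontrivial E with hE | hE
  · exact ⟨1, one_pos, fun x => by simp [Subsingleton.elim x 0]⟩
  obtain ⟨z, hz, hzmin⟩ := (isCompact_sphere (0 : E) 1).exists_isMinOn
    (NormedSpace.sphere_nonempty.2 zero_le_one) p.convexOn.locallyLipschitz.continuous.continuousOn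
  refine ⟨p z, hp z (ne_zero_of_mem_unit_sphere ⟨z, hz⟩), fun x => ?_⟩
  rcases eq_or_ne x 0 with rfl | hx
  · simp
  have hnx : 0 < ‖x‖ := norm_pos_iff.2 hx
  have hmem : ‖x‖⁻¹ • x ∈ Metric.sphere (0 : E) 1 := by simp [norm_smul, hnx.ne']
  have hzx : p z ≤ ‖x‖⁻¹ * p x := by simpa [map_smul_eq_mul] using hzmin hmem
  rwa [le_inv_mul_iff₀ hnx, mul_comm] at hzx

section DualNorm

variable {d : ℕ} (p : Seminorm ℝ (Vec d))

theorem bddAbove_inner_seminorm_unitBall (hp : ∀ x, x ≠ 0 → 0 < p x) (y : Vec d) :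
    BddAbove ((fun x => (⟪x, y⟫ : ℝ)) '' {x | p x ≤ 1}) := by
  obtain ⟨c, hc, hpc⟩ := p.exists_pos_mul_norm_le hp
  refine ⟨c⁻¹ * ‖y‖, ?_⟩
  rintro _ ⟨x, hx, rfl⟩
  have hxc : ‖x‖ ≤ c⁻¹ := by
    rw [← mul_one c⁻¹, le_inv_mul_iff₀ hc]
    exact (hpc x).trans hx
  exact (real_inner_le_norm x y).trans (mul_le_mul_of_nonneg_right hxc (norm_nonneg y))

theorem dualNorm_nonneg (hp : ∀ x, x ≠ 0 → 0 < p x) (y : Vec d) : 0 ≤ dualNorm p y :=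
  le_csSup (bddAbove_inner_seminorm_unitBall p hp y) ⟨0, by simp, inner_zero_left y⟩

theorem inner_le_mul_dualNorm (hp : ∀ x, x ≠ 0 → 0 < p x) (x y : Vec d) :
    ⟪x, y⟫ ≤ p x * dualNorm p y := by
  rcases eq_or_ne x 0 with rfl | hx
  · simp
  have hpx := hp x hx
  have hmem : (p x)⁻¹ • x ∈ {x | p x ≤ 1} := by
    simp [map_smul_eq_mul, abs_of_pos hpx, hpx.ne']
  have h : ⟪(p x)⁻¹ • x, y⟫ ≤ dualNorm p y :=
    le_csSup (bddAbove_inner_seminorm_unitBall p hp y) ⟨_, hmem, rfl⟩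
  rwa [real_inner_smul_left, inv_mul_le_iff₀ hpx] at h

theorem inner_le_of_le_of_dualNorm_le (hp : ∀ x, x ≠ 0 → 0 < p x) {x y : Vec d} {D M : ℝ}
    (hx : p x ≤ D) (hy : dualNorm p y ≤ M) : ⟪x, y⟫ ≤ D * M :=
  (inner_le_mul_dualNorm p hp x y).trans
    (mul_le_mul hx hy (dualNorm_nonneg p hp y) ((apply_nonneg p x).trans hx))

end DualNorm

section FirstOrder

variable {E : Type*} [NormedAddCommGroup E] [InnerProductSpace ℝ E] [CompleteSpace E]

theorem IsMinOn.inner_gradient_sub_nonneg {f : E → ℝ} {W : Set E} {x y G : E}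
    (hmin : IsMinOn f W x) (hW : Convex ℝ W) (hx : x ∈ W) (hy : y ∈ W)
    (hf : HasGradientAt f G x) : 0 ≤ ⟪G, y - x⟫ := by
  simpa using hmin.localize.hasFDerivWithinAt_nonneg hf.hasFDerivAt.hasFDerivWithinAt
    (sub_mem_posTangentConeAt_of_segment_subset (hW.segment_subset hx hy))

theorem hasGradientAt_inner_add_mul_sq_sub {nrm : E → ℝ} {g : E → E} (a w x : E) (γ : ℝ)
    (hg : HasGradientAt (fun v => nrm v ^ 2 / 2) (g (x - w)) (x - w)) :
    HasGradientAt (fun z => ⟪a, z⟫ + 1 / (2 * γ) * nrm (z - w) ^ 2)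
      (a + γ⁻¹ • g (x - w)) x := by
  have hlin : HasGradientAt (fun z => ⟪a, z⟫) a x := by
    rw [hasGradientAt_iff_hasFDerivAt]
    exact (innerSL ℝ a).hasFDerivAt
  have hsq := (hg.hasFDerivAt.comp x ((hasFDerivAt_id x).sub_const w)).const_mul γ⁻¹
  have hfun : (fun z => ⟪a, z⟫ + 1 / (2 * γ) * nrm (z - w) ^ 2)
      = fun z => ⟪a, z⟫ + γ⁻¹ * (nrm (z - w) ^ 2 / 2) := by
    ext z; ring
  rw [hfun, hasGradientAt_iff_hasFDerivAt, map_add, map_smul]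
  exact hlin.hasFDerivAt.add hsq

end FirstOrder

theorem natural_residual_controls_merit_general
    {d : ℕ} (W : Set (Vec d)) (hWcv : Convex ℝ W)
    (F : Vec d → Vec d) (nrm : Vec d → ℝ) (g : Vec d → Vec d)
    (L γ δ η : ℝ)
    -- `nrm` is a norm on ℝ^d
    (hnrm_pos : ∀ x : Vec d, x ≠ 0 → 0 < nrm x)
    (hnrm_add : ∀ x y : Vec d, nrm (x + y) ≤ nrm x + nrm y)
    (hnrm_smul : ∀ (c : ℝ) (x : Vec d), nrm (c • x) = |c| * nrm x)
    (hγ0 : 0 < γ) (hη : 0 < η)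
    -- Assumption 1
    (hLip : ∀ v ∈ W, ∀ u ∈ W, dualNorm nrm (F v - F u) ≤ L * nrm (v - u))
    -- Assumption 2
    (hgrad : ∀ x : Vec d, HasGradientAt (fun v : Vec d => nrm v ^ 2 / 2) (g x) x)
    (hgbound : ∀ x : Vec d, dualNorm nrm (g x) ≤ δ * nrm x)
    -- w' = P_w(η F(w))
    (w w' : Vec d) (hwW : w ∈ W) (hw'W : w' ∈ W)
    (hprox : IsMinOn (fun x => (⟪η • F w, x⟫ : ℝ) + 1 / (2 * γ) * nrm (x - w) ^ 2) W w')
    (D : ℝ) :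
    ∀ v ∈ W, nrm (w' - v) ≤ D →
      (⟪F w', w' - v⟫ : ℝ) ≤ (L + δ / (η * γ)) * D * Real.sqrt (nrm (w - w') ^ 2) := by
  intro v hvW hvD
  let p : Seminorm ℝ (Vec d) := .of nrm hnrm_add fun c x => by rw [Real.norm_eq_abs, hnrm_smul]
  have hVI : 0 ≤ ⟪η • F w + γ⁻¹ • g (w' - w), v - w'⟫ :=
    hprox.inner_gradient_sub_nonneg hWcv hw'W hvW
      (hasGradientAt_inner_add_mul_sq_sub _ w w' γ (hgrad _))
  rw [inner_add_left, real_inner_smul_left, real_inner_smul_left] at hVI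
  have hFF : ⟪F w' - F w, w' - v⟫ ≤ D * (L * nrm (w' - w)) := by
    rw [real_inner_comm]
    exact inner_le_of_le_of_dualNorm_le p hnrm_pos hvD (hLip w' hw'W w hwW)
  have hG : ⟪g (w' - w), v - w'⟫ ≤ D * (δ * nrm (w' - w)) := by
    rw [real_inner_comm]
    exact inner_le_of_le_of_dualNorm_le p hnrm_pos ((map_sub_rev p v w').trans_le hvD)
      (hgbound _)
  have hFw : -⟪F w, v - w'⟫ ≤ δ / (η * γ) * D * nrm (w' - w) := by
    rw [div_mul_eq_mul_div, div_mul_eq_mul_div, le_div_iff₀ (by positivity)]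
    have hscale : γ * (η * ⟪F w, v - w'⟫ + γ⁻¹ * ⟪g (w' - w), v - w'⟫)
        = η * γ * ⟪F w, v - w'⟫ + ⟪g (w' - w), v - w'⟫ := by
      field_simp
    linarith [mul_nonneg hγ0.le hVI]
  have hsplit : ⟪F w', w' - v⟫ = ⟪F w' - F w, w' - v⟫ - ⟪F w, v - w'⟫ := by
    rw [inner_sub_left, ← neg_sub w' v, inner_neg_right]; ring
  have hN : Real.sqrt (nrm (w - w') ^ 2) = nrm (w' - w) :=
    (Real.sqrt_sq (apply_nonneg p _)).trans (map_sub_rev p w w')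
  rw [hN, hsplit]
  linarith

/-- **Proposition (natural residual controls the restricted strong merit function).**
Under Assumptions 1 and 2, for `η > 0`, `w ∈ W` and `w' = P_w(ηF(w))`, with the
quadratic natural residual `r_η(w) = ‖w − w'‖²`, one has for every `D > 0`
`sup{⟪F(w'), w' − z⟫ : z ∈ W, ‖w' − z‖ ≤ D} ≤ (L + δ/(ηγ)) D √(r_η(w))`. -/
theorem natural_residual_controls_merit
    {d : ℕ} (W : Set (Vec d)) (hWne : W.Nonempty) (hWcl : IsClosed W) (hWcv : Convex ℝ W)
    (F : Vec d → Vec d) (nrm : Vec d → ℝ) (g : Vec d → Vec d)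
    (L γ δ η : ℝ)
    -- `nrm` is a norm on ℝ^d
    (hnrm_pos : ∀ x : Vec d, x ≠ 0 → 0 < nrm x)
    (hnrm_add : ∀ x y : Vec d, nrm (x + y) ≤ nrm x + nrm y)
    (hnrm_smul : ∀ (c : ℝ) (x : Vec d), nrm (c • x) = |c| * nrm x)
    (hL : 0 < L) (hγ0 : 0 < γ) (hγ1 : γ ≤ 1) (hδ : 0 < δ) (hη : 0 < η)
    -- Assumption 1
    (hLip : ∀ v ∈ W, ∀ u ∈ W, dualNorm nrm (F v - F u) ≤ L * nrm (v - u))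
    -- Assumption 2
    (hgrad : ∀ x : Vec d, HasGradientAt (fun v : Vec d => nrm v ^ 2 / 2) (g x) x)
    (hstrong : ∀ v x : Vec d,
      nrm v ^ 2 / 2 + ⟪g v, x - v⟫ + γ / 2 * nrm (x - v) ^ 2 ≤ nrm x ^ 2 / 2)
    (hgbound : ∀ x : Vec d, dualNorm nrm (g x) ≤ δ * nrm x)
    -- w' = P_w(η F(w))
    (w w' : Vec d) (hwW : w ∈ W) (hw'W : w' ∈ W)
    (hprox : IsMinOn (fun x => (⟪η • F w, x⟫ : ℝ) + 1 / (2 * γ) * nrm (x - w) ^ 2) W w')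
    (D : ℝ) (hD : 0 < D) :
    ∀ v ∈ W, nrm (w' - v) ≤ D →
      (⟪F w', w' - v⟫ : ℝ) ≤ (L + δ / (η * γ)) * D * Real.sqrt (nrm (w - w') ^ 2) :=
  natural_residual_controls_merit_general W hWcv F nrm g L γ δ η hnrm_pos hnrm_add hnrm_smul hγ0 hη
    hLip hgrad hgbound w w' hwW hw'W hprox D
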